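/- arXiv:1004.0167 — 4 statements merged into one kernel-verified Lean document; each statement's English description precedes it below -/
import Mathlib

section
/- Let A be a discrete almost periodic set in ℝ^p of finite type (i.e., the difference set A − A is discrete). Then A is an ideal crystal: there exist a full rank lattice L ⊆ ℝ^p and a finite set F ⊆ ℝ^p such that A = L + F. -/
open Pointwise

noncomputable section

/-- A set `S ⊆ ℝ^p` is relatively dense if there is `R` such that every ball of
radius `R` contains a point of `S`. -/
def RelativelyDense {p : ℕ} (S : Set (EuclideanSpace ℝ (Fin p))) : Prop :=
  ∃ R : ℝ, ∀ x : EuclideanSpace ℝ (Fin p), ∃ s ∈ S, dist x s ≤ R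

/-- A set `A ⊆ ℝ^p` is discrete: closed with finite intersection with every compact set. -/
def DiscreteSet {p : ℕ} (A : Set (EuclideanSpace ℝ (Fin p))) : Prop :=
  IsClosed A ∧ ∀ K : Set (EuclideanSpace ℝ (Fin p)), IsCompact K → (A ∩ K).Finite

/-- `τ` is an `ε`-almost period of `A`: there is a bijection `σ : A → A` with
`|a + τ - σ a| < ε` for all `a ∈ A`. -/
def IsAlmostPeriodOf {p : ℕ} (A : Set (EuclideanSpace ℝ (Fin p))) (ε : ℝ)
    (τ : EuclideanSpace ℝ (Fin p)) : Prop :=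
  ∃ σ : A ≃ A, ∀ a : A,
    ‖(a : EuclideanSpace ℝ (Fin p)) + τ - (σ a : EuclideanSpace ℝ (Fin p))‖ < ε

/-- `A` is an almost periodic set: for every `ε > 0` its set of `ε`-almost periods is
relatively dense. -/
def AlmostPeriodicSet {p : ℕ} (A : Set (EuclideanSpace ℝ (Fin p))) : Prop :=
  ∀ ε : ℝ, 0 < ε → RelativelyDense {τ | IsAlmostPeriodOf A ε τ}

/-- `L` is a full rank lattice: the set of integer linear combinations of `p` linearly
independent vectors of `ℝ^p`. -/
def IsFullRankLattice {p : ℕ} (L : Set (EuclideanSpace ℝ (Fin p))) : Prop :=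
  ∃ T : Fin p → EuclideanSpace ℝ (Fin p), LinearIndependent ℝ T ∧
    L = {x | ∃ n : Fin p → ℤ, x = ∑ i, (n i : ℝ) • T i}

/-!
If `σ` realises an `ε`-almost period `τ`, then for `a, b ∈ A` the differences `σ a - σ b` and
`a - b` lie within `2ε` of each other, and when `|a - b| ≤ 3R` both lie in the finite set
`(A - A) ∩ B(0, 3R + 1)`. For `ε` below half its separation they coincide, so the displacement
`a ↦ σ a - a` is constant at scale `3R`; as `A` is `R`-relatively dense, it is constant on `A`, and
its value is an exact period within `ε` of `τ`. Hence the group of periods of `A` is relatively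
dense, and it is discrete since it lies in `A - A`: it is a full rank lattice `Λ`, and
`A = Λ + (A ∩ B(0, R))` for `R` its covering radius.
-/

open Filter Topology

theorem Set.Finite.exists_pos_forall_eq_of_dist_lt {X : Type*} [MetricSpace X] {s : Set X}
    (hs : s.Finite) : ∃ δ > 0, ∀ x ∈ s, ∀ y ∈ s, dist x y < δ → x = y := by
  have : ∀ᶠ δ in 𝓝[>] (0 : ℝ), ∀ x ∈ s, ∀ y ∈ s, dist x y < δ → x = y := by
    simp only [hs.eventually_all]
    intro x _ y _
    rcases eq_or_ne x y with rfl | hxy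
    · exact .of_forall fun _ _ => rfl
    · filter_upwards [nhdsWithin_le_nhds (eventually_lt_nhds (dist_pos.2 hxy))] with δ hδ h
      exact absurd (h.trans hδ) (lt_irrefl _)
  exact (this.and self_mem_nhdsWithin).exists.imp fun δ h => ⟨h.2, h.1⟩

theorem eq_of_dist_le_three_mul_of_net {E β : Type*} [NormedAddCommGroup E] [NormedSpace ℝ E]
    {A : Set E} {R : ℝ} (hR : 0 < R) (hnet : ∀ x, ∃ a ∈ A, dist x a ≤ R) {f : A → β}
    (hf : ∀ a b : A, dist a b ≤ 3 * R → f a = f b) (a b : A) : f a = f b := by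
  choose c hcA hc using hnet
  set g : E → β := fun x => f ⟨c x, hcA x⟩
  have hg_step : ∀ x y, dist x y ≤ R → g x = g y := fun x y hxy => hf _ _ <| by
    change dist (c x) (c y) ≤ 3 * R
    linarith [dist_triangle4 (c x) x y (c y), hc x, hc y, dist_comm x (c x)]
  have hg_self : ∀ a : A, g a = f a := fun a => hf _ _ <| by
    change dist (c a) a ≤ 3 * R
    linarith [hc a, dist_comm (a : E) (c a)]
  -- walk from `a` to `b` in steps of length `≤ R`, replacing each point by a nearby one of `A`
  obtain ⟨N, hN⟩ := exists_nat_gt (dist (a : E) b / R)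
  have hN0 : (0 : ℝ) < N := (div_nonneg dist_nonneg hR.le).trans_lt hN
  set x : ℕ → E := fun k => AffineMap.lineMap (a : E) b ((k : ℝ) / N)
  have hx : ∀ k, g (x k) = g (x 0) := by
    intro k
    induction k with
    | zero => rfl
    | succ k ih =>
      refine (hg_step _ _ ?_).symm.trans ih
      simp only [x, dist_lineMap_lineMap, Real.dist_eq]
      have hstep : |(k : ℝ) / N - ↑(k + 1) / N| = 1 / N := by
        rw [Nat.cast_succ, ← sub_div, sub_add_cancel_left, abs_div, abs_neg, abs_one,
          abs_of_pos hN0]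
      rw [hstep, one_div_mul_eq_div, div_le_iff₀ hN0]
      rw [div_lt_iff₀ hR] at hN
      linarith
  calc f a = g (x 0) := by simp [x, hg_self]
    _ = g (x N) := (hx N).symm
    _ = f b := by simp [x, hN0.ne', hg_self]

theorem AddAction.mem_stabilizer_of_equiv {G : Type*} [AddCommGroup G] {A : Set G} (σ : A ≃ A)
    {t : G} (hσ : ∀ a, (σ a : G) = a + t) : t ∈ stabilizer G A := by
  refine mem_stabilizer_set.2 fun x => ⟨fun hx => ?_, fun hx => ?_⟩
  · obtain ⟨a, ha⟩ := σ.surjective ⟨t + x, hx⟩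
    have hax : (a : G) = x := by
      have := congrArg Subtype.val ha
      rw [hσ, add_comm] at this
      exact add_left_cancel this
    exact hax ▸ a.2
  · rw [vadd_eq_add, add_comm, ← hσ ⟨x, hx⟩]
    exact (σ _).2

theorem AddAction.stabilizer_subset_sub {G : Type*} [AddGroup G] {A : Set G} (hA : A.Nonempty) :
    (stabilizer G A : Set G) ⊆ A - A := by
  obtain ⟨a, ha⟩ := hA
  intro t ht
  exact ⟨t + a, (mem_stabilizer_set.1 ht a).2 ha, a, ha, add_sub_cancel_right t a⟩

theorem eq_stabilizer_add_inter_closedBall {E : Type*} [SeminormedAddCommGroup E] {A : Set E}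
    {R : ℝ} (h : ∀ x, ∃ t ∈ AddAction.stabilizer E A, dist x t ≤ R) :
    A = (AddAction.stabilizer E A : Set E) + (A ∩ Metric.closedBall 0 R) := by
  ext x
  refine ⟨fun hx => ?_, ?_⟩
  · obtain ⟨t, ht, hxt⟩ := h x
    have hxt_mem : x - t ∈ A := by
      rw [sub_eq_neg_add]
      exact (AddAction.mem_stabilizer_set.1 (neg_mem ht) x).2 hx
    refine ⟨t, ht, x - t, ⟨hxt_mem, ?_⟩, add_sub_cancel t x⟩
    rwa [mem_closedBall_zero_iff, ← dist_eq_norm]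
  · rintro ⟨t, ht, y, ⟨hy, -⟩, rfl⟩
    exact (AddAction.mem_stabilizer_set.1 ht y).2 hy

theorem DiscreteSet.discreteTopology_of_subset {p : ℕ} {S T : Set (EuclideanSpace ℝ (Fin p))}
    (hT : DiscreteSet T) (hST : S ⊆ T) : DiscreteTopology S := by
  refine continuous_subtype_val.discrete_of_tendsto_cofinite_cocompact
    (tendsto_cofinite_cocompact_iff.2 fun K hK => ?_)
  refine ((hT.2 K hK).preimage Subtype.val_injective.injOn).subset fun x hx => ?_
  exact ⟨hST x.2, hx⟩

theorem RelativelyDense.exists_pos {p : ℕ} {S : Set (EuclideanSpace ℝ (Fin p))}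
    (h : RelativelyDense S) : ∃ R > 0, ∀ x, ∃ s ∈ S, dist x s ≤ R := by
  obtain ⟨R, hR⟩ := h
  exact ⟨max R 1, by positivity,
    fun x => (hR x).imp fun s hs => ⟨hs.1, hs.2.trans (le_max_left _ _)⟩⟩

theorem RelativelyDense.span_eq_top {p : ℕ} {S : Set (EuclideanSpace ℝ (Fin p))}
    (h : RelativelyDense S) : Submodule.span ℝ S = ⊤ := by
  obtain ⟨R, hR, hS⟩ := h.exists_pos
  by_contra hne
  obtain ⟨w, hw, hw0⟩ :=
    Submodule.exists_mem_ne_zero_of_ne_bot (mt Submodule.orthogonal_eq_bot_iff.1 hne)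
  -- a point at distance `2R` from the origin in a direction orthogonal to `S` is far from `S`
  set x := (2 * R / ‖w‖) • w
  have hx : ‖x‖ = 2 * R := by
    rw [norm_smul, Real.norm_eq_abs, abs_of_pos (by positivity),
      div_mul_cancel₀ _ (norm_ne_zero_iff.2 hw0)]
  obtain ⟨s, hs, hxs⟩ := hS x
  have horth : inner ℝ x s = (0 : ℝ) := by
    rw [real_inner_smul_left, real_inner_comm,
      (Submodule.mem_orthogonal _ w).1 hw s (Submodule.subset_span hs), mul_zero]
  have hfar : ‖x‖ ^ 2 ≤ ‖x - s‖ ^ 2 := by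
    rw [norm_sub_sq_real, horth]
    nlinarith [sq_nonneg ‖s‖]
  rw [hx, ← dist_eq_norm] at hfar
  nlinarith [dist_nonneg (x := x) (y := s)]

theorem IsZLattice.isFullRankLattice {p : ℕ} (L : Submodule ℤ (EuclideanSpace ℝ (Fin p)))
    [DiscreteTopology L] [IsZLattice ℝ L] :
    IsFullRankLattice (L : Set (EuclideanSpace ℝ (Fin p))) := by
  have hcard : Fintype.card (Module.Free.ChooseBasisIndex ℤ L) = p := by
    rw [← Module.finrank_eq_card_chooseBasisIndex, ZLattice.rank ℝ L, finrank_euclideanSpace_fin]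
  set b := (Module.Free.chooseBasis ℤ L).reindex (Fintype.equivFinOfCardEq hcard)
  refine ⟨b.ofZLatticeBasis ℝ L, (b.ofZLatticeBasis ℝ L).linearIndependent, ?_⟩
  ext x
  rw [SetLike.mem_coe, ← SetLike.ext_iff.1 (b.ofZLatticeBasis_span ℝ L) x,
    Submodule.mem_span_range_iff_exists_fun ℤ]
  simp only [Set.mem_ofPred_eq, Int.cast_smul_eq_zsmul, eq_comm]

theorem exists_isFullRankLattice (p : ℕ) :
    ∃ L : Set (EuclideanSpace ℝ (Fin p)), IsFullRankLattice L :=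
  ⟨_, _, (EuclideanSpace.basisFun (Fin p) ℝ).toBasis.linearIndependent, rfl⟩

section AlmostPeriodic

variable {p : ℕ} {A : Set (EuclideanSpace ℝ (Fin p))}

local notation "𝔼" => EuclideanSpace ℝ (Fin p)

theorem AlmostPeriodicSet.relativelyDense (hap : AlmostPeriodicSet A) (hA : A.Nonempty) :
    RelativelyDense A := by
  obtain ⟨a, ha⟩ := hA
  obtain ⟨R, hR⟩ := hap 1 one_pos
  refine ⟨R + 1, fun x => ?_⟩
  obtain ⟨τ, ⟨σ, hσ⟩, hτ⟩ := hR (x - a)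
  set b : A := σ ⟨a, ha⟩
  refine ⟨b, b.2, ?_⟩
  have hστ : dist (a + τ) b < 1 := by rw [dist_eq_norm]; exact hσ ⟨a, ha⟩
  have hxτ : dist x (a + τ) = dist (x - a) τ := by rw [dist_eq_norm, dist_eq_norm, sub_sub]
  linarith [dist_triangle x (a + τ) b]

theorem exists_pos_forall_isAlmostPeriodOf_exists_mem_stabilizer {R : ℝ} (hR : 0 < R)
    (hnet : ∀ x, ∃ a ∈ A, dist x a ≤ R) (hft : DiscreteSet (A - A)) :
    ∃ ε > 0, ∀ τ, IsAlmostPeriodOf A ε τ →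
      ∃ t ∈ AddAction.stabilizer 𝔼 A, dist τ t < ε := by
  obtain ⟨δ, hδ, hF⟩ :=
    (hft.2 _ (isCompact_closedBall 0 (3 * R + 1))).exists_pos_forall_eq_of_dist_lt
  refine ⟨min (δ / 2) (1 / 2), by positivity, fun τ ⟨σ, hσ⟩ => ?_⟩
  set ε := min (δ / 2) (1 / 2)
  have hεδ : ε ≤ δ / 2 := min_le_left _ _
  have hε_half : ε ≤ 1 / 2 := min_le_right _ _
  have hloc : ∀ a b : A, dist a b ≤ 3 * R → (σ a : 𝔼) - a = σ b - b := by
    intro a b hab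
    have hclose : dist ((σ a : 𝔼) - σ b) (a - b) < 2 * ε := by
      rw [dist_eq_norm]
      calc ‖(σ a : 𝔼) - σ b - (a - b)‖ = ‖(b + τ - σ b) - (a + τ - σ a)‖ := by congr 1; abel
        _ ≤ ‖b + τ - σ b‖ + ‖a + τ - σ a‖ := norm_sub_le _ _
        _ < _ := by linarith [hσ a, hσ b]
    have hu : dist ((a : 𝔼) - b) 0 ≤ 3 * R := by
      rw [dist_zero_right, ← dist_eq_norm]
      exact hab
    have hv : dist ((σ a : 𝔼) - σ b) 0 ≤ 3 * R + 1 := by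
      linarith [dist_triangle ((σ a : 𝔼) - σ b) (a - b) 0]
    refine sub_eq_sub_iff_sub_eq_sub.1 (hF _ ⟨Set.sub_mem_sub (σ a).2 (σ b).2, hv⟩ _
      ⟨Set.sub_mem_sub a.2 b.2, by rw [Metric.mem_closedBall]; linarith⟩ (by linarith))
  obtain ⟨a, ha, -⟩ := hnet 0
  set a₀ : A := ⟨a, ha⟩
  have hconst := eq_of_dist_le_three_mul_of_net hR hnet hloc
  refine ⟨(σ a₀ : 𝔼) - a₀, AddAction.mem_stabilizer_of_equiv σ fun b => ?_, ?_⟩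
  · rw [← hconst b a₀]
    abel
  · calc dist τ ((σ a₀ : 𝔼) - a₀) = ‖(a₀ : 𝔼) + τ - σ a₀‖ := by
          rw [dist_eq_norm]; congr 1; abel
      _ < _ := hσ a₀

theorem AlmostPeriodicSet.relativelyDense_stabilizer (hap : AlmostPeriodicSet A)
    (hA : A.Nonempty) (hft : DiscreteSet (A - A)) :
    RelativelyDense (AddAction.stabilizer 𝔼 A : Set 𝔼) := by
  obtain ⟨R, hR, hnet⟩ := (AlmostPeriodicSet.relativelyDense hap hA).exists_pos
  obtain ⟨ε, hε, hperiod⟩ := exists_pos_forall_isAlmostPeriodOf_exists_mem_stabilizer hR hnet hft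
  obtain ⟨R', hR'⟩ := hap ε hε
  refine ⟨R' + ε, fun x => ?_⟩
  obtain ⟨τ, hτ, hxτ⟩ := hR' x
  obtain ⟨t, ht, hτt⟩ := hperiod τ hτ
  exact ⟨t, ht, by linarith [dist_triangle x τ t]⟩

end AlmostPeriodic

/-- Any discrete almost periodic set of finite type is an ideal crystal. -/
theorem discrete_almostPeriodic_finiteType_isIdealCrystal {p : ℕ}
    (A : Set (EuclideanSpace ℝ (Fin p)))
    (hdisc : DiscreteSet A) (hap : AlmostPeriodicSet A)
    (hft : DiscreteSet (A - A)) :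
    ∃ (L F : Set (EuclideanSpace ℝ (Fin p))),
      IsFullRankLattice L ∧ F.Finite ∧ A = L + F := by
  rcases A.eq_empty_or_nonempty with rfl | hA
  · obtain ⟨L, hL⟩ := exists_isFullRankLattice p
    exact ⟨L, ∅, hL, Set.finite_empty, Set.add_empty.symm⟩
  set Λ := AddAction.stabilizer (EuclideanSpace ℝ (Fin p)) A
  have hdense := AlmostPeriodicSet.relativelyDense_stabilizer hap hA hft
  have : DiscreteTopology Λ.toIntSubmodule :=
    hft.discreteTopology_of_subset (AddAction.stabilizer_subset_sub hA)
  have : IsZLattice ℝ Λ.toIntSubmodule := ⟨hdense.span_eq_top⟩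
  obtain ⟨R, hR⟩ := hdense
  exact ⟨Λ, A ∩ Metric.closedBall 0 R, IsZLattice.isFullRankLattice Λ.toIntSubmodule,
    hdisc.2 _ (isCompact_closedBall 0 R), eq_stabilizer_add_inter_closedBall hR⟩

end
end

section
/- Let A be a discrete set in ℝ^p such that for every continuous function φ : ℝ^p → ℝ with compact support, the function x ↦ ∑_{a ∈ A} φ(x + a) is Bohr almost periodic on ℝ^p. If moreover the difference set A − A is discrete, then there exist a full rank lattice L ⊆ ℝ^p and a finite set F ⊆ ℝ^p such that A = L + F. -/
/-!
Since `A - A` is discrete, `A` is uniformly discrete, so the periodization `f` of a narrow tent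
function equals `1` exactly on `-A` and is small away from it. Hence an `ε`-almost period `τ` of
`f` moves every point of `A` close to a point of `A`, and conversely. As `A - A` is discrete,
the displacement `a ↦ g a - a` of such a matching is locally constant, and since `A` is
relatively dense (by the same argument with `ε = 1`) it is constant: `τ` is close to an exact
period of `A`. The periods thus form a discrete, relatively dense subgroup, i.e. a full rank
lattice `L`, and `A = L + F` with `F` the finitely many points of `A` in a fundamental domain.
-/

open Pointwise

noncomputable section

/-- `f` is Bohr almost periodic: `f` is continuous and for every `ε > 0` the set of
`τ` with `|f (x + τ) - f x| < ε` for all `x` is relatively dense. -/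
def BohrAlmostPeriodic {p : ℕ} (f : EuclideanSpace ℝ (Fin p) → ℝ) : Prop :=
  Continuous f ∧ ∀ ε : ℝ, 0 < ε →
    RelativelyDense {τ | ∀ x : EuclideanSpace ℝ (Fin p), |f (x + τ) - f x| < ε}

open Metric Set Topology

theorem Set.Finite.exists_pos_pairwise_le_dist {X : Type*} [MetricSpace X] {S : Set X}
    (hS : S.Finite) : ∃ γ > 0, S.Pairwise (γ ≤ dist · ·) := by
  have hS2 : ∀ q ∈ S ×ˢ S, ∀ᶠ γ in 𝓝[>] (0 : ℝ), q.1 ≠ q.2 → γ ≤ dist q.1 q.2 := by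
    rintro ⟨x, y⟩ -
    rcases eq_or_ne x y with rfl | hxy
    · exact .of_forall fun _ h => absurd rfl h
    · filter_upwards [Ioo_mem_nhdsGT (dist_pos.2 hxy)] with γ hγ using fun _ => hγ.2.le
  obtain ⟨γ, hγ, hsep⟩ :=
    (eventually_mem_nhdsWithin.and ((hS.prod hS).eventually_all.2 hS2)).exists
  exact ⟨γ, hγ, fun x hx y hy => hsep (x, y) ⟨hx, hy⟩⟩

section NormedGroup

variable {E : Type*} [NormedAddCommGroup E] {A : Set E}

theorem eq_of_pairwise_sub_inter_closedBall {C γ : ℝ}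
    (hγ : ((A - A) ∩ closedBall 0 C).Pairwise (γ ≤ dist · ·)) {a b : E} (ha : a ∈ A)
    (hb : b ∈ A) (hC : dist a b ≤ C) (hab : dist a b < γ) : a = b := by
  have h0 : (0 : E) ∈ (A - A) ∩ closedBall 0 C :=
    ⟨⟨a, ha, a, ha, sub_self a⟩, mem_closedBall_self (dist_nonneg.trans hC)⟩
  have hsub : a - b ∈ (A - A) ∩ closedBall 0 C :=
    ⟨sub_mem_sub ha hb, by rwa [mem_closedBall, dist_zero_right, ← dist_eq_norm]⟩
  refine sub_eq_zero.1 (hγ.eq hsub h0 ?_)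
  rwa [not_le, dist_zero_right, ← dist_eq_norm]

theorem exists_pos_pairwise_le_dist_of_finite_sub (hA : ((A - A) ∩ closedBall 0 1).Finite) :
    ∃ r > 0, A.Pairwise (r ≤ dist · ·) := by
  obtain ⟨γ, hγ, hsep⟩ := hA.exists_pos_pairwise_le_dist
  refine ⟨min γ 1, by positivity, fun a ha b hb hab => ?_⟩
  by_contra! hlt
  exact hab (eq_of_pairwise_sub_inter_closedBall hsep ha hb
    (hlt.le.trans (min_le_right _ _)) (hlt.trans_le (min_le_left _ _)))

variable [NormedSpace ℝ E]

theorem eq_of_forall_dist_le_of_forall_exists_dist_le {β : Type*} {ρ : ℝ}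
    (hA : ∀ x, ∃ a ∈ A, dist x a ≤ ρ) {d : E → β}
    (hd : ∀ a ∈ A, ∀ b ∈ A, dist a b ≤ 2 * ρ + 1 → d a = d b) {a b : E} (ha : a ∈ A)
    (hb : b ∈ A) : d a = d b := by
  have hρ : 0 ≤ ρ := let ⟨_, _, h⟩ := hA a; dist_nonneg.trans h
  suffices ∀ n : ℕ, ∀ a ∈ A, ∀ b ∈ A, dist a b ≤ 2 * ρ + 1 + n → d a = d b from
    this _ a ha b hb (by linarith [Nat.le_ceil (dist a b)])
  intro n
  induction n with
  | zero => simpa using hd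
  | succ n ih =>
    intro a ha b hb hab
    rcases le_or_gt (dist a b) (2 * ρ + 1) with hle | hgt
    · exact hd a ha b hb hle
    have hpos : 0 < dist a b := by linarith
    set m := AffineMap.lineMap b a ((ρ + 1) / dist a b)
    obtain ⟨c, hc, hmc⟩ := hA m
    have hmb : dist m b = ρ + 1 := by
      rw [dist_lineMap_left, Real.norm_of_nonneg (by positivity), dist_comm b a]
      field_simp
    have hma : dist m a = dist a b - (ρ + 1) := by
      rw [dist_lineMap_right, Real.norm_of_nonneg, dist_comm b a]
      · field_simp
      · rw [sub_nonneg, div_le_one hpos]; linarith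
    push_cast at hab
    rw [ih a ha c hc (by linarith [dist_triangle_left a c m]),
      hd c hc b hb (by linarith [dist_triangle_left c b m])]

theorem exists_mem_stabilizer_dist_lt {ρ γ δ : ℝ} {τ : E} (hA : ∀ x, ∃ a ∈ A, dist x a ≤ ρ)
    (hγ : ((A - A) ∩ closedBall 0 (2 * ρ + 2)).Pairwise (γ ≤ dist · ·)) (hδγ : 2 * δ < γ)
    (hδ : 2 * δ ≤ 1) (hfwd : ∀ a ∈ A, ∃ b ∈ A, dist (a + τ) b < δ)
    (hbwd : ∀ a ∈ A, ∃ b ∈ A, dist (a - τ) b < δ) :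
    ∃ t ∈ AddAction.stabilizer E A, dist τ t < δ := by
  obtain ⟨a₀, ha₀, -⟩ := hA 0
  choose! g hgA hg using hfwd
  have hloc : ∀ a ∈ A, ∀ b ∈ A, dist a b ≤ 2 * ρ + 1 → g a - a = g b - b := by
    intro a ha b hb hab
    have hclose : dist (g a - g b) (a - b) < 2 * δ := by
      rw [← add_sub_add_right_eq_sub a b τ]
      linarith [dist_sub_sub_le (g a) (g b) (a + τ) (b + τ), dist_comm (g a) (a + τ),
        dist_comm (g b) (b + τ), hg a ha, hg b hb]
    have hsub : a - b ∈ (A - A) ∩ closedBall 0 (2 * ρ + 2) :=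
      ⟨sub_mem_sub ha hb, by rw [mem_closedBall, dist_zero_right, ← dist_eq_norm]; linarith⟩
    have hgsub : g a - g b ∈ (A - A) ∩ closedBall 0 (2 * ρ + 2) :=
      ⟨sub_mem_sub (hgA a ha) (hgA b hb), mem_closedBall.2 <| by
        rw [dist_zero_right]
        linarith [norm_le_norm_add_norm_sub' (g a - g b) (a - b),
          dist_eq_norm (g a - g b) (a - b), dist_eq_norm a b]⟩
    exact sub_eq_sub_iff_sub_eq_sub.1 (hγ.eq hgsub hsub (not_le.2 (hclose.trans hδγ)))
  have hgt : ∀ a ∈ A, g a = a + (g a₀ - a₀) := fun a ha => by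
    rw [← eq_of_forall_dist_le_of_forall_exists_dist_le hA hloc ha ha₀, add_sub_cancel]
  set t := g a₀ - a₀
  have htτ : dist τ t < δ := by simpa only [hgt a₀ ha₀, dist_add_left] using hg a₀ ha₀
  refine ⟨t, AddAction.mem_stabilizer_set.2 fun x => ⟨fun hx => ?_, fun hx => ?_⟩, htτ⟩
  · obtain ⟨b, hb, hxb⟩ := hbwd _ hx
    have hρ : 0 ≤ ρ := let ⟨_, _, h⟩ := hA 0; dist_nonneg.trans h
    have hclose : dist (t +ᵥ x) (g b) < 2 * δ := by
      rw [dist_sub_eq_dist_add_left] at hxb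
      linarith [dist_triangle (t +ᵥ x) (b + τ) (g b), hg b hb]
    have := eq_of_pairwise_sub_inter_closedBall hγ hx (hgA b hb) (by linarith)
      (hclose.trans hδγ)
    rw [hgt b hb, vadd_eq_add, add_comm, add_left_inj] at this
    exact this ▸ hb
  · rw [vadd_eq_add, add_comm, ← hgt x hx]
    exact hgA x hx

end NormedGroup

section Tent

variable {E : Type*} [NormedAddCommGroup E] {s ε : ℝ} {y : E}

def tent (s : ℝ) (y : E) : ℝ := max 0 (1 - ‖y‖ / s)

theorem tent_nonneg : 0 ≤ tent s y := le_max_left _ _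

theorem tent_zero : tent s (0 : E) = 1 := by simp [tent]

theorem continuous_tent : Continuous (tent s : E → ℝ) := by
  unfold tent; fun_prop

theorem norm_lt_of_one_sub_lt_tent (hs : 0 < s) (hε : ε ≤ 1) (h : 1 - ε < tent s y) :
    ‖y‖ < s * ε := by
  have : ‖y‖ / s < ε := by
    rcases max_cases 0 (1 - ‖y‖ / s) with ⟨he, -⟩ | ⟨he, -⟩ <;> rw [tent, he] at h <;> linarith
  rwa [div_lt_iff₀' hs] at this

theorem norm_lt_of_tent_ne_zero (hs : 0 < s) (h : tent s y ≠ 0) : ‖y‖ < s := by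
  simpa using norm_lt_of_one_sub_lt_tent hs le_rfl (by simpa using tent_nonneg.lt_of_ne' h)

theorem hasCompactSupport_tent [ProperSpace E] (hs : 0 < s) :
    HasCompactSupport (tent s : E → ℝ) :=
  .intro (isCompact_closedBall 0 s) fun y hy => by
    by_contra h
    exact hy (mem_closedBall_zero_iff.2 (norm_lt_of_tent_ne_zero hs h).le)

variable {A : Set E} {r : ℝ}

theorem finsum_mem_tent_eq (hA : A.Pairwise (r ≤ dist · ·)) (hsr : 2 * s ≤ r) {b : E}
    (hb : b ∈ A) (hyb : ‖y + b‖ < s) : ∑ᶠ a ∈ A, tent s (y + a) = tent s (y + b) := by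
  have hs : 0 < s := (norm_nonneg _).trans_lt hyb
  rw [finsum_mem_def, finsum_eq_single _ b, indicator_of_mem hb]
  intro a hab
  by_cases ha : a ∈ A
  · rw [indicator_of_mem ha]
    by_contra h
    have : r ≤ dist a b := hA ha hb hab
    rw [dist_eq_norm, ← add_sub_add_left_eq_sub a b y] at this
    linarith [norm_sub_le (y + a) (y + b), norm_lt_of_tent_ne_zero hs h]
  · exact indicator_of_notMem ha _

theorem exists_norm_add_lt_of_one_sub_lt_finsum_tent (hA : A.Pairwise (r ≤ dist · ·))
    (hsr : 2 * s ≤ r) (hs : 0 < s) (hε : ε ≤ 1) (h : 1 - ε < ∑ᶠ a ∈ A, tent s (y + a)) :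
    ∃ b ∈ A, ‖y + b‖ < s * ε := by
  obtain ⟨b, hb, hyb⟩ : ∃ b ∈ A, tent s (y + b) ≠ 0 := by
    by_contra! h0
    rw [finsum_mem_eq_zero_of_forall_eq_zero h0] at h
    linarith
  rw [finsum_mem_tent_eq hA hsr hb (norm_lt_of_tent_ne_zero hs hyb)] at h
  exact ⟨b, hb, norm_lt_of_one_sub_lt_tent hs hε h⟩

theorem exists_dist_add_lt_of_forall_abs_sub_lt (hA : A.Pairwise (r ≤ dist · ·))
    (hsr : 2 * s ≤ r) (hs : 0 < s) (hε : ε ≤ 1) {τ : E}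
    (hτ : ∀ x, |∑ᶠ a ∈ A, tent s (x + τ + a) - ∑ᶠ a ∈ A, tent s (x + a)| < ε) {a : E}
    (ha : a ∈ A) : ∃ b ∈ A, dist (a + τ) b < s * ε := by
  have hpeak : ∑ᶠ b ∈ A, tent s (-a + b) = 1 := by
    rw [finsum_mem_tent_eq hA hsr ha (by simpa using hs), neg_add_cancel, tent_zero]
  have := hτ (-a - τ)
  rw [sub_add_cancel, hpeak] at this
  obtain ⟨b, hb, hab⟩ := exists_norm_add_lt_of_one_sub_lt_finsum_tent hA hsr hs hε
    (y := -a - τ) (by linarith [(abs_lt.1 this).2])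
  refine ⟨b, hb, ?_⟩
  rwa [dist_eq_norm, ← norm_neg, show -(a + τ - b) = -a - τ + b by abel]

end Tent

section Lattice

variable {E : Type*} [NormedAddCommGroup E]

theorem discreteTopology_stabilizer {A : Set E} (hA : A.Nonempty) {r : ℝ} (hr : 0 < r)
    (hsep : A.Pairwise (r ≤ dist · ·)) :
    DiscreteTopology (AddAction.stabilizer E A).toIntSubmodule :=
  .of_forall_le_norm hr fun t ht => by
    obtain ⟨a, ha⟩ := hA
    have hta : (t : E) + a ∈ A := (AddAction.mem_stabilizer_set.1 t.2 a).2 ha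
    have : r ≤ dist ((t : E) + a) a := hsep hta ha (by simpa using ht)
    simpa using this

theorem eq_span_add_inter_fundamentalDomain [NormedSpace ℝ E] {ι : Type*} [Fintype ι]
    (B : Module.Basis ι ℝ E) {A : Set E}
    (hA : ∀ t ∈ Submodule.span ℤ (range B), ∀ x ∈ A, t + x ∈ A) :
    A = (Submodule.span ℤ (range B) : Set E) + (A ∩ ZSpan.fundamentalDomain B) := by
  ext x
  constructor
  · intro hx
    have hfract : ZSpan.fract B x ∈ A := by
      simpa [ZSpan.fract_apply, sub_eq_neg_add] using hA _ (neg_mem (ZSpan.floor B x).2) x hx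
    exact ⟨_, (ZSpan.floor B x).2, _, ⟨hfract, ZSpan.fract_mem_fundamentalDomain B x⟩,
      add_sub_cancel _ x⟩
  · rintro ⟨t, ht, y, ⟨hy, -⟩, rfl⟩
    exact hA t ht y hy

theorem isZLattice_of_forall_exists_dist_le [InnerProductSpace ℝ E] [FiniteDimensional ℝ E]
    {L : Submodule ℤ E} [DiscreteTopology L] {R : ℝ} (hL : ∀ x, ∃ t ∈ L, dist x t ≤ R) :
    IsZLattice ℝ L where
  span_top := by
    by_contra hV
    obtain ⟨v, hv, hv0⟩ :=
      Submodule.exists_mem_ne_zero_of_ne_bot (mt Submodule.orthogonal_eq_bot_iff.1 hV)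
    replace hv0 : 0 < ‖v‖ := norm_pos_iff.2 hv0
    obtain ⟨t, ht, hxt⟩ := hL (((R + 1) / ‖v‖) • v)
    have htv : inner ℝ t v = 0 :=
      (Submodule.mem_orthogonal _ _).1 hv t (Submodule.subset_span ht)
    have : (R + 1) * ‖v‖ ≤ R * ‖v‖ := calc
      (R + 1) * ‖v‖ = inner ℝ (((R + 1) / ‖v‖) • v - t) v := by
        rw [inner_sub_left, real_inner_smul_left, htv, real_inner_self_eq_norm_sq, sub_zero]
        field_simp
      _ ≤ ‖((R + 1) / ‖v‖) • v - t‖ * ‖v‖ := real_inner_le_norm _ _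
      _ ≤ R * ‖v‖ := by gcongr; rwa [← dist_eq_norm]
    nlinarith

end Lattice

theorem isFullRankLattice_span {p : ℕ}
    (B : Module.Basis (Fin p) ℝ (EuclideanSpace ℝ (Fin p))) :
    IsFullRankLattice (Submodule.span ℤ (range B) : Set (EuclideanSpace ℝ (Fin p))) := by
  refine ⟨B, B.linearIndependent, Set.ext fun x => ?_⟩
  simp [Submodule.mem_span_range_iff_exists_fun, eq_comm, Int.cast_smul_eq_zsmul]

section Euclidean

variable {p : ℕ} {A : Set (EuclideanSpace ℝ (Fin p))} {r s : ℝ}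

theorem relativelyDense_of_bohrAlmostPeriodic_finsum_tent (hA : A.Nonempty)
    (hsep : A.Pairwise (r ≤ dist · ·)) (hsr : 2 * s ≤ r) (hs : 0 < s)
    (hf : BohrAlmostPeriodic fun x => ∑ᶠ a ∈ A, tent s (x + a)) : RelativelyDense A := by
  obtain ⟨a₀, ha₀⟩ := hA
  obtain ⟨R, hR⟩ := hf.2 1 one_pos
  refine ⟨R + s, fun x => ?_⟩
  obtain ⟨τ, hτ, hxτ⟩ := hR (x - a₀)
  obtain ⟨b, hb, hτb⟩ := exists_dist_add_lt_of_forall_abs_sub_lt hsep hsr hs le_rfl hτ ha₀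
  rw [dist_sub_eq_dist_add_left, add_comm] at hxτ
  exact ⟨b, hb, by linarith [dist_triangle x (a₀ + τ) b]⟩

theorem relativelyDense_stabilizer (hA : A.Nonempty) (hsep : A.Pairwise (r ≤ dist · ·))
    (hsr : 2 * s ≤ r) (hs : 0 < s) (hdiff : DiscreteSet (A - A))
    (hf : BohrAlmostPeriodic fun x => ∑ᶠ a ∈ A, tent s (x + a)) :
    RelativelyDense
      (AddAction.stabilizer (EuclideanSpace ℝ (Fin p)) A : Set (EuclideanSpace ℝ (Fin p))) := by
  obtain ⟨ρ, hρ⟩ := relativelyDense_of_bohrAlmostPeriodic_finsum_tent hA hsep hsr hs hf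
  obtain ⟨γ, hγ, hγsep⟩ :=
    (hdiff.2 _ (isCompact_closedBall 0 (2 * ρ + 2))).exists_pos_pairwise_le_dist
  obtain ⟨δ, hδ, hδs, hδγ, hδ1⟩ : ∃ δ > 0, δ ≤ s ∧ 2 * δ < γ ∧ 2 * δ ≤ 1 :=
    ⟨min (min s (γ / 3)) (1 / 2), by positivity, (min_le_left _ _).trans (min_le_left _ _),
      by linarith [(min_le_left (min s (γ / 3)) (1 / 2)).trans (min_le_right s (γ / 3))],
      by linarith [min_le_right (min s (γ / 3)) (1 / 2)]⟩
  have hsδ : s * (δ / s) = δ := mul_div_cancel₀ _ hs.ne'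
  have hε : δ / s ≤ 1 := (div_le_one hs).2 hδs
  obtain ⟨R, hR⟩ := hf.2 (δ / s) (by positivity)
  refine ⟨R + δ, fun x => ?_⟩
  obtain ⟨τ, hτ, hxτ⟩ := hR x
  have hτneg : ∀ y, |∑ᶠ a ∈ A, tent s (y + -τ + a) - ∑ᶠ a ∈ A, tent s (y + a)| < δ / s :=
    fun y => by simpa [abs_sub_comm] using hτ (y + -τ)
  obtain ⟨t, ht, hτt⟩ := exists_mem_stabilizer_dist_lt hρ hγsep hδγ hδ1
    (fun a ha => hsδ ▸ exists_dist_add_lt_of_forall_abs_sub_lt hsep hsr hs hε hτ ha)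
    (fun a ha => by
      simpa [sub_eq_add_neg, hsδ] using
        exists_dist_add_lt_of_forall_abs_sub_lt hsep hsr hs hε hτneg ha)
  exact ⟨t, ht, by linarith [dist_triangle x τ t]⟩

end Euclidean

/-- If the convolution of the counting measure of a discrete set `A` with every
continuous compactly supported function is Bohr almost periodic, and `A - A` is
discrete, then `A` is an ideal crystal. -/
theorem discrete_weakAP_finiteType_isIdealCrystal {p : ℕ}
    (A : Set (EuclideanSpace ℝ (Fin p)))
    (hdisc : DiscreteSet A)
    (hap : ∀ φ : EuclideanSpace ℝ (Fin p) → ℝ, Continuous φ → HasCompactSupport φ →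
      BohrAlmostPeriodic (fun x => ∑ᶠ a ∈ A, φ (x + a)))
    (hft : DiscreteSet (A - A)) :
    ∃ (L F : Set (EuclideanSpace ℝ (Fin p))),
      IsFullRankLattice L ∧ F.Finite ∧ A = L + F := by
  rcases A.eq_empty_or_nonempty with rfl | hA
  · exact ⟨_, ∅, isFullRankLattice_span (EuclideanSpace.basisFun (Fin p) ℝ).toBasis,
      finite_empty, by simp⟩
  obtain ⟨r, hr, hsep⟩ :=
    exists_pos_pairwise_le_dist_of_finite_sub (hft.2 _ (isCompact_closedBall 0 1))
  let L := (AddAction.stabilizer (EuclideanSpace ℝ (Fin p)) A).toIntSubmodule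
  have : DiscreteTopology L := discreteTopology_stabilizer hA hr hsep
  obtain ⟨R, hR⟩ := relativelyDense_stabilizer hA hsep (by linarith) (half_pos hr) hft
    (hap _ continuous_tent (hasCompactSupport_tent (half_pos hr)))
  have : IsZLattice ℝ L := isZLattice_of_forall_exists_dist_le hR
  let b := Module.finBasisOfFinrankEq ℤ L (by rw [ZLattice.rank ℝ L, finrank_euclideanSpace_fin])
  let B := b.ofZLatticeBasis ℝ L
  obtain ⟨M, hM⟩ := (ZSpan.fundamentalDomain_isBounded B).subset_closedBall 0
  refine ⟨_, A ∩ ZSpan.fundamentalDomain B, isFullRankLattice_span B,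
    (hdisc.2 _ (isCompact_closedBall 0 M)).subset (inter_subset_inter_right _ hM),
    eq_span_add_inter_fundamentalDomain B ?_⟩
  rw [b.ofZLatticeBasis_span ℝ]
  exact fun t ht x hx => (AddAction.mem_stabilizer_set.1 ht x).2 hx
end
end

section
/- Let A be a discrete set in ℝ^p. Then the following are equivalent: (i) for every continuous function φ : ℝ^p → ℝ with compact support, the function x ↦ ∑_{a ∈ A} φ(x + a) is Bohr almost periodic on ℝ^p; (ii) for every ε > 0, the set of ε-almost periods of A, namely {τ ∈ ℝ^p : there exists a bijection σ : A → A with |a + τ − σ(a)| < ε for all a ∈ A}, is relatively dense in ℝ^p. -/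
open Pointwise

noncomputable section

/-!
(ii) ⇒ (i). If `σ` witnesses an almost period `τ`, reindexing by `σ` pairs the terms
`φ (x + τ + a)` and `φ (x + σ a)`, which are close by uniform continuity of `φ`. Only boundedly
many pairs are nonzero, because translating by `1`-almost periods bounds the number of points of
`A` in any ball of a given radius.

(i) ⇒ (ii). Bohr almost periodic functions are bounded, so testing (i) with a bump bounds the
number of points of `A` per ball. Join the points of `B = A ∪ (A + τ)` at distance at most `s`;
for `s` small, every connected component has radius less than `ε`. Rounded to a finite grid and
translated to the origin, the components take only finitely many shapes, and these determine the
finitely many test functions, independently of `τ`. A common almost period `τ` of their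
periodizations, evaluated at a point `b` of a component `K`, shows that `K` contains equally
many points of `A` and of `A + τ`. Matching them inside each component gives the bijection.
-/

open Metric Set Function

section Trapezoid

variable {α : Type*} [PseudoMetricSpace α] {S : Set α} {r : ℝ} {x : α}

def trapezoid (S : Set α) (r : ℝ) (x : α) : ℝ :=
  max 0 (min 1 (2 - infDist x S / r))

theorem continuous_trapezoid (S : Set α) (r : ℝ) : Continuous (trapezoid S r) := by
  unfold trapezoid
  fun_prop

theorem trapezoid_nonneg : 0 ≤ trapezoid S r x := le_max_left _ _

theorem trapezoid_eq_one (hr : 0 < r) (hx : infDist x S ≤ r) : trapezoid S r x = 1 := by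
  have : 1 ≤ 2 - infDist x S / r := by
    rw [le_sub_comm, div_le_iff₀ hr]
    linarith
  simp [trapezoid, min_eq_left this]

theorem exists_dist_lt_of_trapezoid_ne_zero (hS : S.Nonempty) (hr : 0 < r)
    (hx : trapezoid S r x ≠ 0) : ∃ y ∈ S, dist x y < 2 * r := by
  rw [← infDist_lt_iff hS]
  by_contra! h
  have : 2 - infDist x S / r ≤ 0 := by
    rw [sub_nonpos, le_div_iff₀ hr]
    linarith
  exact hx (max_eq_left ((min_le_right _ _).trans this))

theorem hasCompactSupport_trapezoid [ProperSpace α] (hS : IsCompact S) (hne : S.Nonempty)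
    (hr : 0 < r) : HasCompactSupport (trapezoid S r) :=
  HasCompactSupport.of_support_subset_isCompact (hS.cthickening (r := 2 * r)) fun x hx => by
    obtain ⟨y, hy, hxy⟩ := exists_dist_lt_of_trapezoid_ne_zero hne hr hx
    exact mem_cthickening_of_dist_le x y _ S hy hxy.le

end Trapezoid

section Counting

variable {α : Type*} {A S : Set α} {f g : α → ℝ}

theorem finsum_mem_eq_finsum_mem_inter (hf : ∀ a ∈ A, f a ≠ 0 → a ∈ S) :
    ∑ᶠ a ∈ A, f a = ∑ᶠ a ∈ A ∩ S, f a :=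
  finsum_mem_inter_support_eq f A (A ∩ S) <| by
    ext a
    simp only [mem_inter_iff, mem_support]
    exact ⟨fun h => ⟨⟨h.1, hf a h.1 h.2⟩, h.2⟩, fun h => ⟨h.1.1, h.2⟩⟩

theorem finsum_mem_eq_ncard (hS : (A ∩ S).Finite) (h1 : ∀ a ∈ A, a ∈ S → f a = 1)
    (h0 : ∀ a ∈ A, f a ≠ 0 → a ∈ S) : ∑ᶠ a ∈ A, f a = (A ∩ S).ncard := by
  rw [finsum_mem_eq_finsum_mem_inter h0, finsum_mem_congr rfl fun a ha => h1 a ha.1 ha.2,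
    finsum_mem_eq_finite_toFinset_sum _ hS, ncard_eq_toFinset_card _ hS]
  simp

theorem ncard_le_finsum_mem (hfin : (A ∩ support f).Finite) (h0 : ∀ a ∈ A, 0 ≤ f a)
    (h1 : ∀ a ∈ A, a ∈ S → 1 ≤ f a) : ((A ∩ S).ncard : ℝ) ≤ ∑ᶠ a ∈ A, f a := by
  have hsub : A ∩ S ⊆ A ∩ support f := fun a ha =>
    ⟨ha.1, (zero_lt_one.trans_le (h1 a ha.1 ha.2)).ne'⟩
  have hfin' := hfin.subset hsub
  rw [← finsum_mem_inter_support, finsum_mem_eq_finite_toFinset_sum _ hfin,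
    ncard_eq_toFinset_card _ hfin']
  calc ((hfin'.toFinset.card : ℕ) : ℝ) = ∑ a ∈ hfin'.toFinset, 1 := by simp
    _ ≤ ∑ a ∈ hfin'.toFinset, f a :=
      Finset.sum_le_sum fun a ha => by
        obtain ⟨haA, haS⟩ := (Finite.mem_toFinset hfin').mp ha
        exact h1 a haA haS
    _ ≤ ∑ a ∈ hfin.toFinset, f a :=
      Finset.sum_le_sum_of_subset_of_nonneg (Finite.toFinset_subset_toFinset.mpr hsub)
        fun a ha _ => h0 a ((Finite.mem_toFinset hfin).mp ha).1

theorem abs_finsum_mem_sub_le {δ : ℝ} (hS : (A ∩ S).Finite) (hf : ∀ a ∈ A, f a ≠ 0 → a ∈ S)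
    (hg : ∀ a ∈ A, g a ≠ 0 → a ∈ S) (hδ : ∀ a ∈ A ∩ S, |f a - g a| ≤ δ) :
    |∑ᶠ a ∈ A, f a - ∑ᶠ a ∈ A, g a| ≤ (A ∩ S).ncard * δ := by
  rw [finsum_mem_eq_finsum_mem_inter hf, finsum_mem_eq_finsum_mem_inter hg,
    ← finsum_mem_sub_distrib _ _ hS, finsum_mem_eq_finite_toFinset_sum _ hS,
    ncard_eq_toFinset_card _ hS, ← nsmul_eq_mul]
  exact (Finset.abs_sum_le_sum_abs _ _).trans <|
    Finset.sum_le_card_nsmul _ _ _ fun a ha => hδ a ((Finite.mem_toFinset hS).mp ha)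

theorem exists_equiv_forall_eq_of_ncard_eq {γ : Type*} {f g : α → γ}
    (hf : ∀ c, {a ∈ A | f a = c}.Finite) (hg : ∀ c, {a ∈ A | g a = c}.Finite)
    (h : ∀ c, {a ∈ A | f a = c}.ncard = {a ∈ A | g a = c}.ncard) :
    ∃ σ : A ≃ A, ∀ a : A, g (σ a) = f a := by
  have e : ∀ c, Nonempty ({a : A // f a = c} ≃ {a : A // g a = c}) := fun c => by
    have := (hf c).to_subtype
    have := (hg c).to_subtype
    have hcard := h c
    rw [← Nat.card_coe_set_eq, ← Nat.card_coe_set_eq] at hcard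
    obtain ⟨e⟩ := Finite.card_eq.mp hcard
    exact ⟨(Equiv.subtypeSubtypeEquivSubtypeInter (· ∈ A) _).trans <|
      e.trans (Equiv.subtypeSubtypeEquivSubtypeInter (· ∈ A) _).symm⟩
  exact ⟨Equiv.ofFiberEquiv fun c => (e c).some, Equiv.ofFiberEquiv_map (g := fun a : A => g a) _⟩

end Counting

section BohrAlmostPeriodic

variable {p : ℕ}

local notation "E" => EuclideanSpace ℝ (Fin p)

theorem RelativelyDense.mono {S T : Set E} (h : RelativelyDense S) (hST : S ⊆ T) :
    RelativelyDense T := by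
  obtain ⟨R, hR⟩ := h
  refine ⟨R, fun x => ?_⟩
  obtain ⟨s, hs, hxs⟩ := hR x
  exact ⟨s, hST hs, hxs⟩

variable {f : EuclideanSpace ℝ (Fin p) → ℝ}

theorem BohrAlmostPeriodic.exists_abs_le (hf : BohrAlmostPeriodic f) : ∃ C, ∀ x, |f x| ≤ C := by
  obtain ⟨R, hR⟩ := hf.2 1 one_pos
  obtain ⟨C, hC⟩ := (isCompact_closedBall (0 : E) R).exists_bound_of_continuousOn
    hf.1.continuousOn
  refine ⟨C + 1, fun x => ?_⟩
  obtain ⟨τ, hτ, hxτ⟩ := hR x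
  have hshift : |f (x - τ + τ) - f (x - τ)| < 1 := hτ (x - τ)
  rw [sub_add_cancel] at hshift
  have hball : ‖f (x - τ)‖ ≤ C := hC _ (by rwa [mem_closedBall, dist_zero_right, ← dist_eq_norm])
  have := abs_sub_abs_le_abs_sub (f x) (f (x - τ))
  rw [Real.norm_eq_abs] at hball
  linarith

theorem BohrAlmostPeriodic.uniformContinuous (hf : BohrAlmostPeriodic f) :
    UniformContinuous f := by
  refine Metric.uniformContinuous_iff.mpr fun ε hε => ?_
  obtain ⟨R, hR⟩ := hf.2 (ε / 3) (by positivity)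
  obtain ⟨δ, hδ, hfδ⟩ := Metric.uniformContinuousOn_iff.mp
    ((isCompact_closedBall (0 : E) (R + 1)).uniformContinuousOn_of_continuous
      hf.1.continuousOn) (ε / 3) (by positivity)
  refine ⟨min δ 1, by positivity, fun {u v} huv => ?_⟩
  obtain ⟨τ, hτ, huτ⟩ := hR u
  -- translate `u` and `v` by the almost period `τ` into the ball where `f` is uniformly continuous
  have hu : u - τ ∈ closedBall (0 : E) (R + 1) := by
    rw [mem_closedBall, dist_zero_right, ← dist_eq_norm]
    linarith
  have hv : v - τ ∈ closedBall (0 : E) (R + 1) := by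
    rw [mem_closedBall, dist_zero_right, ← dist_eq_norm]
    linarith [dist_triangle v u τ, dist_comm u v, min_le_right δ 1]
  have hmid : dist (f (u - τ)) (f (v - τ)) < ε / 3 :=
    hfδ _ hu _ hv (by rw [dist_sub_right]; exact huv.trans_le (min_le_left _ _))
  have h₁ : |f (u - τ + τ) - f (u - τ)| < ε / 3 := hτ _
  have h₂ : |f (v - τ + τ) - f (v - τ)| < ε / 3 := hτ _
  rw [sub_add_cancel] at h₁ h₂
  rw [Real.dist_eq] at hmid ⊢
  calc |f u - f v| ≤ |f u - f (u - τ)| + |f (u - τ) - f (v - τ)| + |f (v - τ) - f v| :=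
        (abs_sub_le _ (f (v - τ)) _).trans (by gcongr; exact abs_sub_le _ _ _)
    _ < ε := by rw [abs_sub_comm (f (v - τ)) (f v)]; linarith

theorem BohrAlmostPeriodic.exists_finite_translate_net (hf : BohrAlmostPeriodic f) {δ : ℝ}
    (hδ : 0 < δ) : ∃ T : Set E, T.Finite ∧ ∀ y, ∃ t ∈ T, ∀ x, |f (x + y) - f (x + t)| ≤ δ := by
  obtain ⟨η, hη, hfη⟩ := Metric.uniformContinuous_iff.mp hf.uniformContinuous (δ / 2)
    (by positivity)
  obtain ⟨R, hR⟩ := hf.2 (δ / 2) (by positivity)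
  obtain ⟨T, -, hTfin, hT⟩ :=
    finite_approx_of_totallyBounded (isCompact_closedBall (0 : E) R).totallyBounded η hη
  refine ⟨T, hTfin, fun y => ?_⟩
  obtain ⟨τ, hτ, hyτ⟩ := hR y
  have hz : y - τ ∈ closedBall (0 : E) R := by
    rwa [mem_closedBall, dist_zero_right, ← dist_eq_norm]
  obtain ⟨t, ht, hzt⟩ := mem_iUnion₂.mp (hT hz)
  refine ⟨t, ht, fun x => ?_⟩
  have h₁ : |f (x + (y - τ) + τ) - f (x + (y - τ))| < δ / 2 := hτ _
  have h₂ : dist (f (x + (y - τ))) (f (x + t)) < δ / 2 :=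
    hfη (by rw [dist_add_left]; exact mem_ball.mp hzt)
  rw [add_assoc, sub_add_cancel] at h₁
  rw [Real.dist_eq] at h₂
  linarith [abs_sub_le (f (x + y)) (f (x + (y - τ))) (f (x + t))]

/-- Each `y` is matched with a representative `y'` having the same approximations in all the
finite nets; then `y - y'` is a common almost period, and the representatives are bounded. -/
theorem relativelyDense_common_almostPeriods {ι : Type*} [Finite ι]
    {F : ι → EuclideanSpace ℝ (Fin p) → ℝ} (hF : ∀ i, BohrAlmostPeriodic (F i)) {δ : ℝ}
    (hδ : 0 < δ) : RelativelyDense {τ : E | ∀ i x, |F i (x + τ) - F i x| ≤ δ} := by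
  choose T hTfin hT using fun i => (hF i).exists_finite_translate_net (half_pos hδ)
  choose c hcT hc using fun y i => hT i y
  have : Finite (range c) :=
    ((Finite.pi fun i => hTfin i).subset (range_subset_iff.mpr fun y i _ => hcT y i)).to_subtype
  obtain ⟨R, hR⟩ := (finite_range fun κ => ‖rangeSplitting c κ‖).bddAbove
  refine ⟨R, fun y => ?_⟩
  set y' := rangeSplitting c ⟨c y, mem_range_self y⟩
  have hy' : c y' = c y := apply_rangeSplitting c _
  refine ⟨y - y', fun i x => ?_, ?_⟩
  · have h₁ := hc y i (x - y')
    have h₂ := hc y' i (x - y')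
    rw [hy', sub_add_cancel] at h₂
    rw [show x - y' + y = x + (y - y') by abel] at h₁
    rw [abs_sub_comm] at h₂
    linarith [abs_sub_le (F i (x + (y - y'))) (F i (x - y' + c y i)) (F i x)]
  · rw [dist_eq_norm, sub_sub_cancel]
    exact hR ⟨_, rfl⟩

end BohrAlmostPeriodic

section ProximityGraph

variable {α : Type*} [PseudoMetricSpace α] {B : Set α} {s : ℝ} {x y z : α}

def proximityGraph (B : Set α) (s : ℝ) : SimpleGraph α where
  Adj x y := x ≠ y ∧ x ∈ B ∧ y ∈ B ∧ dist x y ≤ s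
  symm := ⟨fun _ _ h => ⟨h.1.symm, h.2.2.1, h.2.1, by rw [dist_comm]; exact h.2.2.2⟩⟩
  loopless := ⟨fun _ h => h.1 rfl⟩

theorem proximityGraph_adj :
    (proximityGraph B s).Adj x y ↔ x ≠ y ∧ x ∈ B ∧ y ∈ B ∧ dist x y ≤ s :=
  Iff.rfl

theorem mem_of_reachable_proximityGraph (hx : x ∈ B)
    (h : (proximityGraph B s).Reachable x y) : y ∈ B := by
  obtain ⟨w⟩ := h
  induction w with
  | nil => exact hx
  | cons hadj _ ih => exact ih (proximityGraph_adj.mp hadj).2.2.1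

theorem eq_of_reachable_proximityGraph (hx : x ∉ B) (h : (proximityGraph B s).Reachable x y) :
    y = x := by
  obtain ⟨w⟩ := h
  cases w with
  | nil => rfl
  | cons hadj _ => exact absurd (proximityGraph_adj.mp hadj).2.1 hx

theorem reachable_proximityGraph_of_dist_le (h : (proximityGraph B s).Reachable x y)
    (hy : y ∈ B) (hz : z ∈ B) (hyz : dist y z ≤ s) : (proximityGraph B s).Reachable x z := by
  obtain rfl | hne := eq_or_ne y z
  · exact h
  · exact h.trans (SimpleGraph.Adj.reachable (proximityGraph_adj.mpr ⟨hne, hy, hz, hyz⟩))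

theorem finite_setOf_reachable_proximityGraph {ρ : ℝ} (hx : x ∈ B)
    (hfin : (B ∩ closedBall x ρ).Finite)
    (hρ : ∀ y, (proximityGraph B s).Reachable x y → dist y x ≤ ρ) :
    {y | (proximityGraph B s).Reachable x y}.Finite :=
  hfin.subset fun y hy => ⟨mem_of_reachable_proximityGraph hx hy, mem_closedBall.mpr (hρ y hy)⟩

theorem getVert_mem_and_dist_le_proximityGraph (hx : x ∈ B)
    (w : (proximityGraph B s).Walk x y) {i : ℕ} (hi : i ≤ w.length) :
    w.getVert i ∈ B ∧ dist (w.getVert i) x ≤ i * s := by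
  induction i with
  | zero => simpa using hx
  | succ i ih =>
    have hadj := proximityGraph_adj.mp (w.adj_getVert_succ (Nat.lt_of_succ_le hi))
    refine ⟨hadj.2.2.1, ?_⟩
    have := dist_triangle (w.getVert (i + 1)) (w.getVert i) x
    rw [dist_comm (w.getVert (i + 1)) (w.getVert i)] at this
    push_cast
    linarith [hadj.2.2.2, (ih (Nat.le_of_succ_le hi)).2]

/-- A path from `x` visits distinct points of `B`, its `i`-th one within distance `i * s` of `x`;
so if `B` has at most `n` points near `x`, a path from `x` has length less than `n`. -/
theorem dist_le_of_reachable_proximityGraph {n : ℕ} {ρ : ℝ} (hs : 0 ≤ s) (hnρ : n * s ≤ ρ)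
    (hx : x ∈ B) (hfin : (B ∩ closedBall x ρ).Finite) (hcard : (B ∩ closedBall x ρ).ncard ≤ n)
    (h : (proximityGraph B s).Reachable x y) : dist y x ≤ n * s := by
  classical
  obtain ⟨w, hw⟩ := h.exists_isPath
  have hlen : w.length < n := by
    by_contra! hn
    have hinj : Set.InjOn w.getVert (Finset.range (n + 1) : Set ℕ) := fun i hi j hj =>
      hw.getVert_injOn (Nat.le_of_lt_succ (Finset.mem_range.mp hi) |>.trans hn)
        (Nat.le_of_lt_succ (Finset.mem_range.mp hj) |>.trans hn)
    have hsub : ((Finset.range (n + 1)).image w.getVert : Set α) ⊆ B ∩ closedBall x ρ := by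
      intro v hv
      obtain ⟨i, hi, rfl⟩ := Finset.mem_image.mp hv
      have hin : i ≤ n := Nat.le_of_lt_succ (Finset.mem_range.mp hi)
      obtain ⟨hB, hd⟩ := getVert_mem_and_dist_le_proximityGraph hx w (hin.trans hn)
      refine ⟨hB, mem_closedBall.mpr (hd.trans ?_)⟩
      exact le_trans (mul_le_mul_of_nonneg_right (by exact_mod_cast hin) hs) hnρ
    have := ncard_le_ncard hsub hfin
    rw [ncard_coe_finset, Finset.card_image_of_injOn hinj, Finset.card_range] at this
    omega
  have := (getVert_mem_and_dist_le_proximityGraph hx w le_rfl).2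
  rw [w.getVert_length] at this
  exact this.trans (mul_le_mul_of_nonneg_right (by exact_mod_cast hlen.le) hs)

end ProximityGraph

theorem SimpleGraph.exists_equiv_reachable_of_ncard_eq {α : Type*} {Γ : SimpleGraph α} {A : Set α}
    {e : α → α} (he : e.Injective) (hfin : ∀ b, {x | Γ.Reachable b x}.Finite)
    (heq : ∀ b, {a ∈ A | Γ.Reachable b (e a)}.ncard = {a ∈ A | Γ.Reachable b a}.ncard) :
    ∃ σ : A ≃ A, ∀ a : A, Γ.Reachable (σ a) (e a) := by
  have hshift : ∀ b, {a ∈ A | Γ.connectedComponentMk (e a) = Γ.connectedComponentMk b} =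
      {a ∈ A | Γ.Reachable b (e a)} := fun b => by
    simp only [ConnectedComponent.eq, reachable_comm (v := b)]
  have hbase : ∀ b, {a ∈ A | Γ.connectedComponentMk a = Γ.connectedComponentMk b} =
      {a ∈ A | Γ.Reachable b a} := fun b => by
    simp only [ConnectedComponent.eq, reachable_comm (v := b)]
  obtain ⟨σ, hσ⟩ := exists_equiv_forall_eq_of_ncard_eq (A := A)
    (f := fun a => Γ.connectedComponentMk (e a)) (g := Γ.connectedComponentMk)
    (ConnectedComponent.ind fun b => by
      rw [hshift]
      exact ((hfin b).preimage he.injOn).inter_of_right A)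
    (ConnectedComponent.ind fun b => by
      rw [hbase]
      exact (hfin b).inter_of_right A)
    (ConnectedComponent.ind fun b => by rw [hshift, hbase]; exact heq b)
  exact ⟨σ, fun a => ConnectedComponent.eq.mp (hσ a)⟩

section AlmostPeriodicSet

variable {p : ℕ} {A : Set (EuclideanSpace ℝ (Fin p))} {φ : EuclideanSpace ℝ (Fin p) → ℝ}

local notation "E" => EuclideanSpace ℝ (Fin p)

theorem DiscreteSet.finite_inter_closedBall (hA : DiscreteSet A) (c : E) (r : ℝ) :
    (A ∩ closedBall c r).Finite :=
  hA.2 _ (isCompact_closedBall c r)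

theorem DiscreteSet.finite_inter_support (hA : DiscreteSet A) (hφ : HasCompactSupport φ)
    (x : E) : (A ∩ support fun a => φ (x + a)).Finite :=
  (hA.2 _ (hφ.comp_homeomorph (Homeomorph.addLeft x)).isCompact).subset
    (inter_subset_inter_right _ (subset_tsupport _))

theorem DiscreteSet.continuous_finsum (hA : DiscreteSet A) (hφ : Continuous φ)
    (hφs : HasCompactSupport φ) : Continuous fun x => ∑ᶠ a ∈ A, φ (x + a) := by
  simp_rw [← finsum_set_coe_eq_finsum_mem]
  refine _root_.continuous_finsum (fun a => hφ.comp (continuous_add_const _)) fun x₀ => ?_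
  obtain ⟨M, hM⟩ := hφs.isCompact.isBounded.subset_closedBall 0
  refine ⟨closedBall x₀ 1, closedBall_mem_nhds x₀ one_pos, ?_⟩
  refine ((hA.finite_inter_closedBall (-x₀) (M + 1)).preimage
    Subtype.val_injective.injOn).subset ?_
  rintro a ⟨x, hxa, hx⟩
  refine ⟨a.2, mem_closedBall.mpr ?_⟩
  have hxa' : ‖x + a‖ ≤ M := by
    simpa using hM (subset_tsupport _ (mem_support.mpr hxa))
  rw [mem_closedBall, dist_eq_norm] at hx
  rw [dist_eq_norm, show (a : E) - -x₀ = (x + a) - (x - x₀) by abel]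
  linarith [norm_sub_le (x + a) (x - x₀)]

theorem IsAlmostPeriodOf.exists_bijOn {ε : ℝ} {τ : E} (h : IsAlmostPeriodOf A ε τ) :
    ∃ g : E → E, BijOn g A A ∧ ∀ a ∈ A, ‖a + τ - g a‖ < ε := by
  classical
  obtain ⟨σ, hσ⟩ := h
  refine ⟨Equiv.Perm.ofSubtype σ, Equiv.bijOn _ (Equiv.Perm.ofSubtype_apply_mem_iff_mem σ),
    fun a ha => ?_⟩
  rw [Equiv.Perm.ofSubtype_apply_of_mem σ ha]
  exact hσ ⟨a, ha⟩

theorem DiscreteSet.exists_ncard_inter_closedBall_le_of_relativelyDense (hA : DiscreteSet A)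
    (hAP : RelativelyDense {τ | IsAlmostPeriodOf A 1 τ}) (r : ℝ) :
    ∃ N : ℕ, ∀ c, (A ∩ closedBall c r).ncard ≤ N := by
  obtain ⟨R, hR⟩ := hAP
  refine ⟨(A ∩ closedBall 0 (r + R + 1)).ncard, fun c => ?_⟩
  obtain ⟨τ, hτ, hcτ⟩ := hR (-c)
  obtain ⟨g, hg, hgτ⟩ := hτ.exists_bijOn
  refine ncard_le_ncard_of_injOn g (fun a ha => ⟨hg.mapsTo ha.1, ?_⟩)
    (hg.injOn.mono inter_subset_left) (hA.finite_inter_closedBall _ _)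
  have hac := mem_closedBall.mp ha.2
  have hga := hgτ a ha.1
  rw [dist_eq_norm] at hac hcτ
  rw [mem_closedBall, dist_zero_right, show g a = -(a + τ - g a) + (a - c) - (-c - τ) by abel]
  linarith [norm_sub_le (-(a + τ - g a) + (a - c)) (-c - τ), norm_add_le (-(a + τ - g a)) (a - c),
    norm_neg (a + τ - g a)]

theorem bohrAlmostPeriodic_finsum_of_almostPeriodicSet (hA : DiscreteSet A)
    (hAP : AlmostPeriodicSet A) (hφ : Continuous φ) (hφs : HasCompactSupport φ) :
    BohrAlmostPeriodic fun x => ∑ᶠ a ∈ A, φ (x + a) := by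
  refine ⟨hA.continuous_finsum hφ hφs, fun ε hε => ?_⟩
  obtain ⟨M, hM⟩ := hφs.isCompact.isBounded.subset_closedBall 0
  obtain ⟨N, hN⟩ := hA.exists_ncard_inter_closedBall_le_of_relativelyDense (hAP 1 one_pos) (M + 1)
  obtain ⟨η, hη, hφη⟩ := Metric.uniformContinuous_iff.mp
    (hφs.uniformContinuous_of_continuous hφ) (ε / (N + 1)) (by positivity)
  refine (hAP (min η 1) (by positivity)).mono fun τ hτ x => ?_
  obtain ⟨g, hg, hgτ⟩ := hτ.exists_bijOn
  -- only the points of `A` near `-(x + τ)` contribute to either sum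
  have hnear : ∀ a ∈ A, ‖x + τ + a‖ ≤ M + 1 → a ∈ closedBall (-(x + τ)) (M + 1) := fun a _ h => by
    rwa [mem_closedBall, dist_eq_norm, sub_neg_eq_add, add_comm]
  have hsupp : ∀ y, φ y ≠ 0 → ‖y‖ ≤ M := fun y hy => by
    simpa using hM (subset_tsupport _ (mem_support.mpr hy))
  show |∑ᶠ a ∈ A, φ (x + τ + a) - ∑ᶠ a ∈ A, φ (x + a)| < ε
  rw [← finsum_mem_eq_of_bijOn g hg (f := fun a => φ (x + g a))
    (g := fun a => φ (x + a)) fun _ _ => rfl]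
  calc |∑ᶠ a ∈ A, φ (x + τ + a) - ∑ᶠ a ∈ A, φ (x + g a)|
      ≤ (A ∩ closedBall (-(x + τ)) (M + 1)).ncard * (ε / (N + 1)) := by
        refine abs_finsum_mem_sub_le (hA.finite_inter_closedBall _ _)
          (fun a ha h => hnear a ha (by linarith [hsupp _ h]))
          (fun a ha h => hnear a ha ?_) fun a ha => (hφη ?_).le
        · rw [show x + τ + a = (x + g a) + (a + τ - g a) by abel]
          linarith [norm_add_le (x + g a) (a + τ - g a), hsupp _ h, hgτ a ha, min_le_right η 1]
        · rw [dist_eq_norm, show x + τ + a - (x + g a) = a + τ - g a by abel]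
          exact (hgτ a ha.1).trans_le (min_le_left _ _)
    _ ≤ N * (ε / (N + 1)) := by gcongr; exact hN _
    _ < ε := by
        rw [← mul_div_assoc, div_lt_iff₀ (by positivity)]
        linarith

end AlmostPeriodicSet

section Components

variable {α : Type*} [SeminormedAddCommGroup α]

theorem exists_trapezoid_separating_component {B : Set α} {s r R : ℝ} {G : Finset α} {b : α}
    (hr : 0 < r) (hrs : 3 * r ≤ s) (hG : ∀ y ∈ closedBall (0 : α) R, ∃ v ∈ G, dist y v < r)
    (hb : b ∈ B) (hR : ∀ x, (proximityGraph B s).Reachable b x → dist x b ≤ R) :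
    ∃ t ∈ G.powerset.filter Finset.Nonempty,
      (∀ x, (proximityGraph B s).Reachable b x → trapezoid t r (x - b) = 1) ∧
      ∀ z ∈ B, trapezoid t r (z - b) ≠ 0 → (proximityGraph B s).Reachable b z := by
  classical
  -- the grid points approximating the component of `b`, translated to the origin
  set t := G.filter fun v => ∃ x, (proximityGraph B s).Reachable b x ∧ dist (x - b) v < r
  have hmem : ∀ x, (proximityGraph B s).Reachable b x → ∃ v ∈ t, dist (x - b) v < r :=
    fun x hx => by
      obtain ⟨v, hv, hxv⟩ :=
        hG _ (by rw [mem_closedBall, dist_zero_right, ← dist_eq_norm]; exact hR x hx)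
      exact ⟨v, Finset.mem_filter.mpr ⟨hv, x, hx, hxv⟩, hxv⟩
  have hne : t.Nonempty := by
    obtain ⟨v, hv, -⟩ := hmem b (SimpleGraph.Reachable.refl b)
    exact ⟨v, hv⟩
  refine ⟨t, Finset.mem_filter.mpr ⟨Finset.mem_powerset.mpr (Finset.filter_subset _ _), hne⟩,
    fun x hx => ?_, fun z hz hzt => ?_⟩
  · obtain ⟨v, hv, hxv⟩ := hmem x hx
    exact trapezoid_eq_one hr ((infDist_le_dist_of_mem (Finset.mem_coe.mpr hv)).trans hxv.le)
  · obtain ⟨v, hv, hzv⟩ := exists_dist_lt_of_trapezoid_ne_zero (Finset.coe_nonempty.mpr hne) hr hzt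
    obtain ⟨-, x, hx, hxv⟩ := Finset.mem_filter.mp hv
    refine reachable_proximityGraph_of_dist_le hx (mem_of_reachable_proximityGraph hb hx) hz ?_
    rw [← dist_sub_right x z b]
    linarith [dist_triangle_right (x - b) (z - b) v]

theorem ncard_eq_of_abs_finsum_sub_lt_one {A K : Set α} {τ b : α} {φ : α → ℝ} (hK : K.Finite)
    (hone : ∀ x ∈ K, φ (x - b) = 1) (hzero : ∀ z ∈ A ∪ (· + τ) '' A, φ (z - b) ≠ 0 → z ∈ K)
    (h : |∑ᶠ a ∈ A, φ (-b + τ + a) - ∑ᶠ a ∈ A, φ (-b + a)| < 1) :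
    {a ∈ A | a + τ ∈ K}.ncard = (A ∩ K).ncard := by
  have hshift : ∑ᶠ a ∈ A, φ (-b + τ + a) = {a ∈ A | a + τ ∈ K}.ncard := by
    refine finsum_mem_eq_ncard ((hK.preimage (add_left_injective τ).injOn).inter_of_right A)
      (fun a _ haK => ?_) fun a ha h => ?_
    · rw [show -b + τ + a = a + τ - b by abel]
      exact hone _ haK
    · rw [show -b + τ + a = a + τ - b by abel] at h
      exact hzero _ (Or.inr ⟨a, ha, rfl⟩) h
  have hbase : ∑ᶠ a ∈ A, φ (-b + a) = (A ∩ K).ncard := by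
    refine finsum_mem_eq_ncard (hK.inter_of_right A) (fun a _ haK => ?_) fun a ha h => ?_
    · rw [neg_add_eq_sub]
      exact hone _ haK
    · rw [neg_add_eq_sub] at h
      exact hzero _ (Or.inl ha) h
  rw [hshift, hbase] at h
  have : |(({a ∈ A | a + τ ∈ K}.ncard : ℤ) - (A ∩ K).ncard)| < 1 := by exact_mod_cast h
  have := Int.abs_lt_one_iff.mp this
  omega

end Components

section WeaklyAlmostPeriodic

variable {p : ℕ} {A : Set (EuclideanSpace ℝ (Fin p))}

local notation "E" => EuclideanSpace ℝ (Fin p)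

theorem DiscreteSet.exists_ncard_inter_closedBall_le_of_bohrAlmostPeriodic (hA : DiscreteSet A)
    {r : ℝ} (hr : 0 < r) (hf : BohrAlmostPeriodic fun x => ∑ᶠ a ∈ A, trapezoid {0} r (x + a)) :
    ∃ N : ℕ, ∀ c, (A ∩ closedBall c r).ncard ≤ N := by
  obtain ⟨C, hC⟩ := hf.exists_abs_le
  refine ⟨⌊C⌋₊, fun c => Nat.le_floor ?_⟩
  calc ((A ∩ closedBall c r).ncard : ℝ) ≤ ∑ᶠ a ∈ A, trapezoid {0} r (-c + a) := by
        refine ncard_le_finsum_mem (hA.finite_inter_support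
          (hasCompactSupport_trapezoid isCompact_singleton (singleton_nonempty 0) hr) (-c))
          (fun _ _ => trapezoid_nonneg) fun a _ hac => (trapezoid_eq_one hr ?_).ge
        rwa [infDist_singleton, dist_zero_right, neg_add_eq_sub, ← dist_eq_norm]
    _ ≤ C := (le_abs_self _).trans (hC (-c))

theorem DiscreteSet.union_image_add_const (hA : DiscreteSet A) (τ : E) :
    DiscreteSet (A ∪ (· + τ) '' A) := by
  refine ⟨hA.1.union ((Homeomorph.addRight τ).isClosedMap _ hA.1), fun K hK => ?_⟩
  rw [union_inter_distrib_right, ← image_inter_preimage]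
  exact (hA.2 K hK).union ((hA.2 _ ((Homeomorph.addRight τ).isCompact_preimage.mpr hK)).image _)

theorem DiscreteSet.ncard_union_image_add_const_inter_closedBall_le (hA : DiscreteSet A)
    {ρ : ℝ} {N : ℕ} (hN : ∀ c, (A ∩ closedBall c ρ).ncard ≤ N) (τ c : E) :
    ((A ∪ (· + τ) '' A) ∩ closedBall c ρ).ncard ≤ 2 * N := by
  rw [union_inter_distrib_right, ← image_inter_preimage, preimage_add_right_closedBall]
  linarith [ncard_union_le (A ∩ closedBall c ρ) ((· + τ) '' (A ∩ closedBall (c - τ) ρ)),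
    ncard_image_le (f := (· + τ)) (hA.finite_inter_closedBall (c - τ) ρ), hN c, hN (c - τ)]

theorem isAlmostPeriodOf_of_ncard_reachable_eq {τ : E} {s ε : ℝ} {n : ℕ} (hs : 0 ≤ s)
    (hns : n * s < ε) (hB : DiscreteSet (A ∪ (· + τ) '' A))
    (hcard : ∀ c, ((A ∪ (· + τ) '' A) ∩ closedBall c ε).ncard ≤ n)
    (heq : ∀ b ∈ A ∪ (· + τ) '' A,
      {a ∈ A | (proximityGraph (A ∪ (· + τ) '' A) s).Reachable b (a + τ)}.ncard =
        {a ∈ A | (proximityGraph (A ∪ (· + τ) '' A) s).Reachable b a}.ncard) :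
    IsAlmostPeriodOf A ε τ := by
  set B := A ∪ (· + τ) '' A
  set Γ := proximityGraph B s
  have hdist : ∀ b ∈ B, ∀ x, Γ.Reachable b x → dist x b ≤ n * s := fun b hb _ =>
    dist_le_of_reachable_proximityGraph hs hns.le hb (hB.finite_inter_closedBall b ε) (hcard b)
  have hfin : ∀ b, {x | Γ.Reachable b x}.Finite := fun b => by
    by_cases hb : b ∈ B
    · exact finite_setOf_reachable_proximityGraph hb (hB.finite_inter_closedBall b ε)
        fun x hx => (hdist b hb x hx).trans hns.le
    · exact (finite_singleton b).subset fun x hx => eq_of_reachable_proximityGraph hb hx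
  have heq' : ∀ b, {a ∈ A | Γ.Reachable b (a + τ)}.ncard = {a ∈ A | Γ.Reachable b a}.ncard :=
    fun b => by
      by_cases hb : b ∈ B
      · exact heq b hb
      · have hB' : ∀ x ∈ B, ¬Γ.Reachable b x := fun x hx h =>
          hb (eq_of_reachable_proximityGraph hb h ▸ hx)
        rw [sep_eq_empty_iff_mem_false.mpr fun a ha => hB' _ (Or.inr ⟨a, ha, rfl⟩),
          sep_eq_empty_iff_mem_false.mpr fun a ha => hB' _ (Or.inl ha)]
  obtain ⟨σ, hσ⟩ := SimpleGraph.exists_equiv_reachable_of_ncard_eq (add_left_injective τ) hfin heq'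
  refine ⟨σ, fun a => ?_⟩
  rw [← dist_eq_norm]
  exact (hdist _ (Or.inl (σ a).2) _ (hσ a)).trans_lt hns

theorem almostPeriodicSet_of_forall_bohrAlmostPeriodic (hA : DiscreteSet A)
    (hAP : ∀ φ : E → ℝ, Continuous φ → HasCompactSupport φ →
      BohrAlmostPeriodic fun x => ∑ᶠ a ∈ A, φ (x + a)) :
    AlmostPeriodicSet A := by
  intro ε hε
  obtain ⟨N, hN⟩ := hA.exists_ncard_inter_closedBall_le_of_bohrAlmostPeriodic hε <|
    hAP _ (continuous_trapezoid _ _)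
      (hasCompactSupport_trapezoid isCompact_singleton (singleton_nonempty 0) hε)
  set n := 2 * N
  set s := ε / (n + 1)
  have hs : 0 < s := by positivity
  have hns : n * s < ε := by
    rw [mul_div_assoc', div_lt_iff₀ (by positivity)]
    linarith
  obtain ⟨G, -, hGfin, hG⟩ := finite_approx_of_totallyBounded
    (isCompact_closedBall (0 : E) ε).totallyBounded (s / 3) (by positivity)
  set 𝒯 := hGfin.toFinset.powerset.filter Finset.Nonempty
  let F : 𝒯 → E → ℝ := fun t x => ∑ᶠ a ∈ A, trapezoid (t : Finset E) (s / 3) (x + a)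
  have hF : ∀ t, BohrAlmostPeriodic (F t) := fun t =>
    hAP _ (continuous_trapezoid _ _) (hasCompactSupport_trapezoid t.1.finite_toSet.isCompact
      (Finset.coe_nonempty.mpr (Finset.mem_filter.mp t.2).2) (by positivity))
  refine (relativelyDense_common_almostPeriods hF one_half_pos).mono fun τ hτ => ?_
  have hB := hA.union_image_add_const τ
  have hcard := hA.ncard_union_image_add_const_inter_closedBall_le hN τ
  refine isAlmostPeriodOf_of_ncard_reachable_eq hs.le hns hB hcard fun b hb => ?_
  have hR : ∀ x, (proximityGraph _ s).Reachable b x → dist x b ≤ ε := fun x hx =>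
    (dist_le_of_reachable_proximityGraph hs.le hns.le hb (hB.finite_inter_closedBall b ε)
      (hcard b) hx).trans hns.le
  obtain ⟨t, ht, hone, hzero⟩ := exists_trapezoid_separating_component (G := hGfin.toFinset)
    (r := s / 3) (by positivity) (by linarith)
    (fun y hy => by simpa using mem_iUnion₂.mp (hG hy)) hb hR
  exact ncard_eq_of_abs_finsum_sub_lt_one
    (finite_setOf_reachable_proximityGraph hb (hB.finite_inter_closedBall b ε) hR) hone hzero
    ((hτ ⟨t, ht⟩ (-b)).trans_lt one_half_lt_one)

end WeaklyAlmostPeriodic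

/-- A discrete set `A` has Bohr almost periodic convolutions with all continuous
compactly supported functions iff for every `ε > 0` its set of `ε`-almost periods
is relatively dense. -/
theorem discrete_weakAP_iff_almostPeriods_relativelyDense {p : ℕ}
    (A : Set (EuclideanSpace ℝ (Fin p))) (hdisc : DiscreteSet A) :
    (∀ φ : EuclideanSpace ℝ (Fin p) → ℝ, Continuous φ → HasCompactSupport φ →
      BohrAlmostPeriodic (fun x => ∑ᶠ a ∈ A, φ (x + a)))
    ↔ (∀ ε : ℝ, 0 < ε → RelativelyDense {τ | IsAlmostPeriodOf A ε τ}) :=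
  ⟨almostPeriodicSet_of_forall_bohrAlmostPeriodic hdisc,
    fun hAP _ hφ hφs => bohrAlmostPeriodic_finsum_of_almostPeriodicSet hdisc hAP hφ hφs⟩
end
end

section
/- Let A be a nonempty discrete almost periodic set in ℝ^p. Then A is relatively dense in ℝ^p; in particular there exists D < ∞ such that for every a ∈ A the ball of center a and radius D contains at least one point b ∈ A with b ≠ a. -/
open Pointwise

noncomputable section

/-- A nonempty discrete almost periodic set is relatively dense; in particular each of
its points has another point of the set within a uniformly bounded distance. -/
theorem discrete_almostPeriodic_relativelyDense {p : ℕ} (hp : 0 < p)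
    (A : Set (EuclideanSpace ℝ (Fin p))) (hne : A.Nonempty)
    (hdisc : DiscreteSet A) (hap : AlmostPeriodicSet A) :
    RelativelyDense A ∧
      ∃ D : ℝ, ∀ a ∈ A, ∃ b ∈ A, b ≠ a ∧ dist a b ≤ D := by
  obtain ⟨a₀, ha₀⟩ := hne
  obtain ⟨R, hR⟩ := hap 1 one_pos
  set R' : ℝ := max R 0 + 1 with hR'def
  have hR'pos : (1:ℝ) ≤ R' := by have := le_max_right R 0; simp only [hR'def]; linarith
  have hdense : ∀ x : EuclideanSpace ℝ (Fin p), ∃ s ∈ A, dist x s ≤ R' := by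
    intro x
    obtain ⟨τ, hτ, hd⟩ := hR (x - a₀)
    obtain ⟨σ, hσ⟩ := hτ
    refine ⟨σ ⟨a₀, ha₀⟩, (σ ⟨a₀, ha₀⟩).2, ?_⟩
    have h1 := hσ ⟨a₀, ha₀⟩
    have h2 : dist x (a₀ + τ) ≤ max R 0 := by
      rw [dist_eq_norm]
      have : x - (a₀ + τ) = (x - a₀) - τ := by abel
      rw [this, ← dist_eq_norm]
      exact hd.trans (le_max_left _ _)
    have h3 : dist (a₀ + τ) ((σ ⟨a₀, ha₀⟩ : A) : EuclideanSpace ℝ (Fin p)) ≤ 1 := by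
      rw [dist_eq_norm]
      exact le_of_lt h1
    calc dist x ((σ ⟨a₀, ha₀⟩ : A) : EuclideanSpace ℝ (Fin p))
        ≤ dist x (a₀ + τ) + dist (a₀ + τ) _ := dist_triangle _ _ _
      _ ≤ max R 0 + 1 := add_le_add h2 h3
  refine ⟨⟨R', hdense⟩, 2 * R' + 1, ?_⟩
  intro a ha
  set v : EuclideanSpace ℝ (Fin p) := EuclideanSpace.single ⟨0, hp⟩ (R' + 1) with hv
  have hvnorm : ‖v‖ = R' + 1 := by
    rw [hv, EuclideanSpace.norm_single, Real.norm_eq_abs, abs_of_pos (by linarith)]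
  obtain ⟨s, hs, hds⟩ := hdense (a + v)
  have hdax : dist a (a + v) = R' + 1 := by
    rw [dist_eq_norm]
    simpa using hvnorm
  have hlb : R' + 1 ≤ dist a s + R' := by
    calc R' + 1 = dist a (a + v) := hdax.symm
      _ ≤ dist a s + dist s (a + v) := dist_triangle _ _ _
      _ ≤ dist a s + R' := by rw [dist_comm s]; linarith
  refine ⟨s, hs, ?_, ?_⟩
  · intro h
    rw [h] at hlb
    simp at hlb
    linarith
  · calc dist a s ≤ dist a (a + v) + dist (a + v) s := dist_triangle _ _ _
      _ ≤ 2 * R' + 1 := by linarith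
end
end
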